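/- Let Q_n be the type II Hermite–Padé polynomial of a Nikishin system 𝓝(σ₁,…,σ_m) for a decreasing multi-index n, and define Ψ_{n,0} = Q_n and Ψ_{n,k}(z) = ∫ Ψ_{n,k−1}(x)/(z−x) dσₖ(x). Then for every k = 1,…,m and every j = k,…,m, ∫ xᵛ Ψ_{n,k−1}(x) ds_{k,j}(x) = 0 for ν = 0,…,nⱼ−1. -/

import Mathlib

open MeasureTheory Polynomial

/-- Topological support of a measure on ℝ. -/
def msupport (σ : Measure ℝ) : Set ℝ := {x : ℝ | ∀ U ∈ nhds x, σ U ≠ 0}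

/-- Iterated Cauchy transform of a chain of measures. -/
noncomputable def chainT (σ : ℕ → Measure ℝ) : List ℕ → ℂ → ℂ
  | [] => fun _ => 1
  | [i] => fun z => ∫ x, (z - (x : ℂ))⁻¹ ∂(σ i)
  | i :: j :: l => fun z => ∫ x, chainT σ (j :: l) x / (z - x) ∂(σ i)

/-- `ŝ_{j,k}` for the Nikishin system generated by `σ j, σ (j+1), …` (here `j ≤ k`). -/
noncomputable def shat (σ : ℕ → Measure ℝ) (j k : ℕ) : ℂ → ℂ :=
  chainT σ (List.range' j (k + 1 - j))

/-- `Ψ_{n,0} = Q_n` and `Ψ_{n,k}(z) = ∫ Ψ_{n,k-1}(x)/(z-x) dσₖ(x)`. -/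
noncomputable def Psi (σ : ℕ → Measure ℝ) (Q : Polynomial ℝ) : ℕ → ℂ → ℂ
  | 0 => fun z => (Q.map (algebraMap ℝ ℂ)).eval z
  | (k + 1) => fun z => ∫ x, Psi σ Q k x / (z - x) ∂(σ (k + 1))

/-!
The proof is an induction on `k`. Since `Ψ_k` is the Cauchy transform of `Ψ_{k-1}` against `σₖ`
and `Ψ_{k-1}` is `σₖ`-orthogonal to polynomials of degree `< nₖ`, for `ν < nⱼ ≤ nₖ` the factor
`xᵛ` can be moved inside the transform (`xᵛ - tᵛ` is divisible by `x - t`). Fubini on the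
product of the disjoint intervals `Δₖ × Δₖ₊₁` then turns `∫ xᵛ Ψ_k ŝ_{k+2,j} dσₖ₊₁` into
`-∫ tᵛ Ψ_{k-1} ŝ_{k+1,j} dσₖ`, which vanishes by the induction hypothesis for `(k, j)`.
-/

open Set

noncomputable def cauchyTransform (μ : Measure ℝ) (g : ℝ → ℂ) (z : ℂ) : ℂ :=
  ∫ x, g x / (z - x) ∂μ

theorem integrable_of_continuousOn_of_ae_mem {X E : Type*} [TopologicalSpace X] [T2Space X]
    [MeasurableSpace X] [OpensMeasurableSpace X] [NormedAddCommGroup E] {μ : Measure X}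
    [IsFiniteMeasure μ] {K : Set X} {f : X → E} (hK : IsCompact K) (hμK : ∀ᵐ x ∂μ, x ∈ K)
    (hf : ContinuousOn f K) : Integrable f μ := by
  simpa only [IntegrableOn, Measure.restrict_eq_self_of_ae_mem hμK] using
    hf.integrableOn_compact (μ := μ) hK

section CauchyTransform

variable {μ ν : Measure ℝ} [IsFiniteMeasure μ] [IsFiniteMeasure ν] {K L : Set ℝ}

theorem continuousOn_cauchyTransform (hK : IsCompact K) (hμK : ∀ᵐ x ∂μ, x ∈ K) {g : ℝ → ℂ}
    (hg : ContinuousOn g K) : ContinuousOn (fun y : ℝ => cauchyTransform μ g y) Kᶜ := by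
  intro y₀ hy₀
  obtain ⟨r, hr, hball⟩ := Metric.isOpen_iff.mp hK.isClosed.isOpen_compl y₀ hy₀
  set U := Metric.closedBall y₀ (r / 2)
  have hU : U ∈ nhds y₀ := Metric.closedBall_mem_nhds y₀ (half_pos hr)
  have hne : ∀ y ∈ U, ∀ x ∈ K, (y : ℂ) - x ≠ 0 := fun y hy x hx =>
    sub_ne_zero.mpr <| Complex.ofReal_injective.ne <| (ne_of_mem_of_not_mem hx <|
      hball (Metric.closedBall_subset_ball (half_lt_self hr) hy)).symm
  have hF : ContinuousOn (fun p : ℝ × ℝ => g p.2 / ((p.1 : ℂ) - p.2)) (U ×ˢ K) :=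
    (hg.comp continuousOn_snd fun p hp => hp.2).div (by fun_prop) fun p hp => hne _ hp.1 _ hp.2
  obtain ⟨M, hM⟩ := ((isCompact_closedBall y₀ (r / 2)).prod hK).exists_bound_of_continuousOn hF
  refine (continuousAt_of_dominated (bound := fun _ => M) ?_ ?_ (integrable_const M)
    ?_).continuousWithinAt
  · filter_upwards [hU] with y hy
    exact (integrable_of_continuousOn_of_ae_mem hK hμK
      (hg.div (by fun_prop) fun x hx => hne y hy x hx)).aestronglyMeasurable
  · filter_upwards [hU] with y hy
    filter_upwards [hμK] with x hx using hM (y, x) ⟨hy, hx⟩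
  · filter_upwards [hμK] with x hx
    exact continuousAt_const.div (by fun_prop)
      (hne y₀ (Metric.mem_closedBall_self (half_pos hr).le) x hx)

theorem integral_cauchyTransform_mul (hK : IsCompact K) (hL : IsCompact L) (hKL : Disjoint K L)
    (hμK : ∀ᵐ x ∂μ, x ∈ K) (hνL : ∀ᵐ x ∂ν, x ∈ L) {f h : ℝ → ℂ} (hf : ContinuousOn f K)
    (hh : ContinuousOn h L) :
    ∫ x, cauchyTransform μ f x * h x ∂ν = -∫ t, f t * cauchyTransform ν h t ∂μ := by
  have hne : ∀ p ∈ L ×ˢ K, (p.1 : ℂ) - p.2 ≠ 0 := fun p hp =>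
    sub_ne_zero.mpr <| Complex.ofReal_injective.ne (hKL.ne_of_mem hp.2 hp.1).symm
  have hint : Integrable (Function.uncurry fun x t => f t * h x / ((x : ℂ) - t)) (ν.prod μ) := by
    refine integrable_of_continuousOn_of_ae_mem (hL.prod hK) ?_ ?_
    · refine (Measure.ae_prod_mem_iff_ae_ae_mem (hL.measurableSet.prod hK.measurableSet)).mpr ?_
      filter_upwards [hνL] with x hx
      filter_upwards [hμK] with t ht using ⟨hx, ht⟩
    · exact ((hf.comp continuousOn_snd fun p hp => hp.2).mul
        (hh.comp continuousOn_fst fun p hp => hp.1)).div (by fun_prop) hne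
  calc ∫ x, cauchyTransform μ f x * h x ∂ν
      = ∫ x, ∫ t, f t * h x / ((x : ℂ) - t) ∂μ ∂ν := by
        refine integral_congr_ae (Filter.Eventually.of_forall fun x => ?_)
        simp only [cauchyTransform, ← integral_mul_const]
        congr 1 with t
        ring
    _ = ∫ t, ∫ x, f t * h x / ((x : ℂ) - t) ∂ν ∂μ := integral_integral_swap hint
    _ = -∫ t, f t * cauchyTransform ν h t ∂μ := by
        rw [← integral_neg]
        refine integral_congr_ae (Filter.Eventually.of_forall fun t => ?_)
        simp only [cauchyTransform, ← integral_const_mul, ← integral_neg]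
        congr 1 with x
        rw [← neg_sub (t : ℂ), div_neg, mul_div_assoc]

/-- `xⁿ - tⁿ = (x - t) q(x, t)` with `q` of degree `< n` in `t`, and `g` is orthogonal to such `q`. -/
theorem pow_mul_cauchyTransform (hK : IsCompact K) (hμK : ∀ᵐ x ∂μ, x ∈ K) {g : ℝ → ℂ}
    (hg : ContinuousOn g K) {n : ℕ} (hmom : ∀ i < n, ∫ t, (t : ℂ) ^ i * g t ∂μ = 0) {x : ℝ}
    (hx : x ∉ K) :
    (x : ℂ) ^ n * cauchyTransform μ g x = cauchyTransform μ (fun t => (t : ℂ) ^ n * g t) x := by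
  have hne : ∀ t ∈ K, (x : ℂ) - t ≠ 0 := fun t ht =>
    sub_ne_zero.mpr <| Complex.ofReal_injective.ne (ne_of_mem_of_not_mem ht hx).symm
  have hsplit : ∀ t ∈ K, (x : ℂ) ^ n * (g t / (x - t)) =
      (t : ℂ) ^ n * g t / (x - t) +
        ∑ i ∈ Finset.range n, (x : ℂ) ^ i * ((t : ℂ) ^ (n - 1 - i) * g t) := by
    intro t ht
    have hgeom := geom_sum₂_mul (x : ℂ) t n
    simp only [← mul_assoc, ← Finset.sum_mul]
    rw [mul_div_assoc', eq_comm, div_add' _ _ _ (hne t ht), div_left_inj' (hne t ht)]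
    linear_combination g t * hgeom
  have hint : ∀ i, Integrable (fun t : ℝ => (x : ℂ) ^ i * ((t : ℂ) ^ (n - 1 - i) * g t)) μ :=
    fun i => integrable_of_continuousOn_of_ae_mem hK hμK (by fun_prop)
  rw [cauchyTransform, cauchyTransform, ← integral_const_mul,
    integral_congr_ae (hμK.mono hsplit), integral_add, integral_finsetSum _ fun i _ => hint i,
    Finset.sum_eq_zero, add_zero]
  · intro i hi
    rw [integral_const_mul, hmom _ (by simp at hi; omega), mul_zero]
  · exact integrable_of_continuousOn_of_ae_mem hK hμK
      ((by fun_prop : Continuous fun t : ℝ => (t : ℂ) ^ n).continuousOn.mul hg |>.div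
        (by fun_prop) hne)
  · exact integrable_finsetSum _ fun i _ => hint i

theorem integral_pow_mul_cauchyTransform_mul (hK : IsCompact K) (hL : IsCompact L)
    (hKL : Disjoint K L) (hμK : ∀ᵐ x ∂μ, x ∈ K) (hνL : ∀ᵐ x ∂ν, x ∈ L) {g h : ℝ → ℂ}
    (hg : ContinuousOn g K) (hh : ContinuousOn h L) {n : ℕ}
    (hmom : ∀ i < n, ∫ t, (t : ℂ) ^ i * g t ∂μ = 0) :
    ∫ x, (x : ℂ) ^ n * cauchyTransform μ g x * h x ∂ν =
      -∫ t, (t : ℂ) ^ n * g t * cauchyTransform ν h t ∂μ := by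
  calc ∫ x, (x : ℂ) ^ n * cauchyTransform μ g x * h x ∂ν
      = ∫ x, cauchyTransform μ (fun t => (t : ℂ) ^ n * g t) x * h x ∂ν := by
        refine integral_congr_ae ?_
        filter_upwards [hνL] with x hx
        rw [pow_mul_cauchyTransform hK hμK hg hmom (disjoint_right.mp hKL hx)]
    _ = _ := integral_cauchyTransform_mul hK hL hKL hμK hνL
        ((by fun_prop : Continuous fun t : ℝ => (t : ℂ) ^ n).continuousOn.mul hg) hh

end CauchyTransform

theorem msupport_eq_support (σ : Measure ℝ) : msupport σ = σ.support := by
  ext x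
  simp [msupport, Measure.mem_support_iff_forall, pos_iff_ne_zero]

theorem ae_mem_of_msupport_subset {σ : Measure ℝ} {s : Set ℝ} (h : msupport σ ⊆ s) :
    ∀ᵐ x ∂σ, x ∈ s :=
  Filter.mem_of_superset σ.support_mem_ae (msupport_eq_support σ ▸ h)

/-- The density of `s_{k,j}` with respect to `σₖ`, i.e. `ŝ_{k+1,j}`, read as `1` when `j = k`. -/
noncomputable def nikishinWeight (σ : ℕ → Measure ℝ) (k j : ℕ) (z : ℂ) : ℂ :=
  if j = k then 1 else shat σ (k + 1) j z

theorem shat_eq_cauchyTransform (σ : ℕ → Measure ℝ) {p q : ℕ} (hpq : p ≤ q) :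
    shat σ p q = cauchyTransform (σ p) (fun x => nikishinWeight σ p q x) := by
  funext z
  obtain ⟨d, rfl⟩ := Nat.exists_eq_add_of_le hpq
  rcases d with _ | d
  · simp [shat, nikishinWeight, cauchyTransform, chainT]
  · have hlen : p + (d + 1) + 1 - p = d + 1 + 1 := by omega
    have hlen' : p + (d + 1) + 1 - (p + 1) = d + 1 := by omega
    simp [shat, nikishinWeight, cauchyTransform, hlen, hlen', List.range'_succ, chainT]

theorem Psi_eq_cauchyTransform (σ : ℕ → Measure ℝ) (Q : Polynomial ℝ) {k : ℕ} (hk : 1 ≤ k) :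
    Psi σ Q k = cauchyTransform (σ k) (fun x => Psi σ Q (k - 1) x) := by
  obtain ⟨k, rfl⟩ := Nat.exists_eq_add_of_le' hk
  rfl

section Nikishin

variable {m : ℕ} {A B : ℕ → ℝ} {σ : ℕ → Measure ℝ} [∀ j, IsFiniteMeasure (σ j)]

theorem continuousOn_nikishinWeight
    (hdisj : ∀ j, 1 ≤ j → j < m → Disjoint (Icc (A j) (B j)) (Icc (A (j + 1)) (B (j + 1))))
    (hσ : ∀ j, 1 ≤ j → j ≤ m → ∀ᵐ x ∂σ j, x ∈ Icc (A j) (B j)) {p j : ℕ} (hp : 1 ≤ p)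
    (hpj : p ≤ j) (hjm : j ≤ m) :
    ContinuousOn (fun x : ℝ => nikishinWeight σ p j x) (Icc (A p) (B p)) := by
  induction hpj using Nat.decreasingInduction with
  | self => simpa [nikishinWeight] using continuousOn_const
  | of_succ p hpj ih =>
    show ContinuousOn (fun x : ℝ => if j = p then 1 else shat σ (p + 1) j x) _
    simp only [if_neg hpj.ne', shat_eq_cauchyTransform σ hpj]
    exact (continuousOn_cauchyTransform isCompact_Icc (hσ (p + 1) (by omega) (by omega))
      (ih (by omega))).mono (hdisj p hp (by omega)).subset_compl_right

theorem continuousOn_Psi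
    (hdisj : ∀ j, 1 ≤ j → j < m → Disjoint (Icc (A j) (B j)) (Icc (A (j + 1)) (B (j + 1))))
    (hσ : ∀ j, 1 ≤ j → j ≤ m → ∀ᵐ x ∂σ j, x ∈ Icc (A j) (B j)) (Q : Polynomial ℝ) {r : ℕ}
    (hr : r < m) : ContinuousOn (fun x : ℝ => Psi σ Q r x) (Icc (A (r + 1)) (B (r + 1))) := by
  induction r with
  | zero =>
    exact ((Q.map (algebraMap ℝ ℂ)).continuous.comp Complex.continuous_ofReal).continuousOn
  | succ r ih =>
    exact (continuousOn_cauchyTransform isCompact_Icc (hσ (r + 1) (by omega) (by omega))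
      (ih (by omega))).mono (hdisj (r + 1) (by omega) hr).subset_compl_left

end Nikishin

theorem stmt10_general (m : ℕ) (A B : ℕ → ℝ)
    (hdisj : ∀ j, 1 ≤ j → j < m → Disjoint (Set.Icc (A j) (B j)) (Set.Icc (A (j+1)) (B (j+1))))
    (σ : ℕ → Measure ℝ) [∀ j, IsFiniteMeasure (σ j)]
    (hsupp : ∀ j, 1 ≤ j → j ≤ m → msupport (σ j) ⊆ Set.Icc (A j) (B j))
    (n : ℕ → ℕ) (hdec : ∀ j, 1 ≤ j → j < m → n (j + 1) ≤ n j)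
    (Q : Polynomial ℝ)
    -- defining type II orthogonality (the case `k = 1`):
    (horth : ∀ j, 1 ≤ j → j ≤ m → ∀ ν < n j,
      ∫ x, (x : ℂ) ^ ν * Psi σ Q 0 x * (if j = 1 then 1 else shat σ 2 j x) ∂(σ 1) = 0) :
    ∀ k, 1 ≤ k → k ≤ m → ∀ j, k ≤ j → j ≤ m → ∀ ν < n j,
      ∫ x, (x : ℂ) ^ ν * Psi σ Q (k - 1) x *
          (if j = k then 1 else shat σ (k + 1) j x) ∂(σ k) = 0 := by
  have hσ : ∀ j, 1 ≤ j → j ≤ m → ∀ᵐ x ∂σ j, x ∈ Icc (A j) (B j) :=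
    fun j h1 h2 => ae_mem_of_msupport_subset (hsupp j h1 h2)
  have hn : AntitoneOn n (Icc 1 m) :=
    antitoneOn_of_succ_le ordConnected_Icc fun j _ hj hj' => hdec j hj.1 hj'.2
  intro k hk
  induction k, hk using Nat.le_induction with
  | base => exact fun _ => horth
  | succ k hk ih =>
    intro hkm j hkj hjm ν hν
    have hmom : ∀ i < ν, ∫ t, (t : ℂ) ^ i * Psi σ Q (k - 1) t ∂σ k = 0 := fun i hi => by
      simpa using ih (by omega) k le_rfl (by omega) i
        (hi.trans (hν.trans_le (hn ⟨hk, by omega⟩ ⟨by omega, hjm⟩ (by omega))))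
    have hIH := ih (by omega) j (by omega) hjm ν hν
    simp only [if_neg (by omega : j ≠ k), shat_eq_cauchyTransform σ (by omega : k + 1 ≤ j)] at hIH
    have hPsi := continuousOn_Psi hdisj hσ Q (r := k - 1) (by omega)
    rw [Nat.sub_add_cancel hk] at hPsi
    rw [Nat.add_sub_cancel, Psi_eq_cauchyTransform σ Q hk]
    exact (integral_pow_mul_cauchyTransform_mul isCompact_Icc isCompact_Icc (hdisj k hk hkm)
      (hσ k hk (by omega)) (hσ (k + 1) (by omega) hkm) hPsi
      (continuousOn_nikishinWeight hdisj hσ (by omega) hkj hjm) hmom).trans (by rw [hIH, neg_zero])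

/-- for the type II Hermite–Padé polynomial of a Nikishin system with a
decreasing multi-index, `∫ xᵛ Ψ_{n,k-1}(x) ds_{k,j}(x) = 0` for every `k = 1,…,m`,
`j = k,…,m` and `ν < nⱼ`, where `ds_{k,j} = ŝ_{k+1,j} dσₖ`. -/
theorem stmt10 (m : ℕ) (hm : 1 ≤ m) (A B : ℕ → ℝ) (hAB : ∀ j, A j ≤ B j)
    (hdisj : ∀ j, 1 ≤ j → j < m → Disjoint (Set.Icc (A j) (B j)) (Set.Icc (A (j+1)) (B (j+1))))
    (σ : ℕ → Measure ℝ) [∀ j, IsFiniteMeasure (σ j)]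
    (hsupp : ∀ j, 1 ≤ j → j ≤ m → msupport (σ j) ⊆ Set.Icc (A j) (B j))
    (hco : ∀ j, 1 ≤ j → j ≤ m → convexHull ℝ (msupport (σ j)) = Set.Icc (A j) (B j))
    (hinf : ∀ j, 1 ≤ j → j ≤ m → (msupport (σ j)).Infinite)
    (n : ℕ → ℕ) (hdec : ∀ j, 1 ≤ j → j < m → n (j + 1) ≤ n j)
    (Q : Polynomial ℝ) (hQ : Q ≠ 0) (hdeg : Q.natDegree ≤ ∑ k ∈ Finset.Icc 1 m, n k)
    -- defining type II orthogonality (the case `k = 1`):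
    (horth : ∀ j, 1 ≤ j → j ≤ m → ∀ ν < n j,
      ∫ x, (x : ℂ) ^ ν * Psi σ Q 0 x * (if j = 1 then 1 else shat σ 2 j x) ∂(σ 1) = 0) :
    ∀ k, 1 ≤ k → k ≤ m → ∀ j, k ≤ j → j ≤ m → ∀ ν < n j,
      ∫ x, (x : ℂ) ^ ν * Psi σ Q (k - 1) x *
          (if j = k then 1 else shat σ (k + 1) j x) ∂(σ k) = 0 :=
  stmt10_general m A B hdisj σ hsupp n hdec Q horth
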